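/- Assume ε ∈ {1,−1}, ξ ∉ {0, 1/6}, εξ(1−6ξ) > 0, z is twice differentiable at λ* with z′(λ*) ≠ 0, z(λ*)² = 1/(6εξ(1−6ξ)), (1−6ξ)(2ξλ*z(λ*) + 1 + w_m) ≠ 0, 2ξ(1−3w_m)/((1−6ξ)(2ξλ*z(λ*) + 1 + w_m)) > 0, and y* = √(2ξ(1−3w_m)/((1−6ξ)(2ξλ*z(λ*) + 1 + w_m))). Let J be the 3×3 Jacobian matrix of the vector field F at the point P₂ᵦ = (0, y*, λ*). Then J is nilpotent with J³ = 0; in particular all three eigenvalues of J vanish and the slow-roll inflation point is degenerate. -/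

import Mathlib

open Polynomial Filter

/-!
At `P = (0, y*, λ*)` the condition on `z(λ*)` makes `D(λ*) = 0` and the choice of `y*` makes
`B(P) = 0`. Since `f₃ = x·D/z′`, the last row of the Jacobian then vanishes, so its characteristic
polynomial is `X` times that of the `(x, y)`-block. That block is traceless, again by the choice
of `y*`, and its determinant vanishes identically at `x = 0`, so the characteristic polynomial is
`X³` and Cayley–Hamilton gives `J³ = 0`.
-/

/-- The factor `D(λ) = 1 − 6εξ(1−6ξ)z(λ)²` coming from the time reparametrization. -/
noncomputable def Dfun (ε ξ : ℝ) (z : ℝ → ℝ) (l : ℝ) : ℝ :=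
  1 - 6*ε*ξ*(1-6*ξ)*(z l)^2

/-- The common bracket
`B(x,y,λ) = −4/3 − 2ξλy²z(λ) + ε(1−6ξ)(1−w_m)x² + 2εξ(1−3w_m)(x+z(λ))² + (1+w_m)(1−y²)`. -/
noncomputable def Bfun (ε ξ wm : ℝ) (z : ℝ → ℝ) (x y l : ℝ) : ℝ :=
  -4/3 - 2*ξ*l*y^2*(z l) + ε*(1-6*ξ)*(1-wm)*x^2
    + 2*ε*ξ*(1-3*wm)*(x + z l)^2 + (1+wm)*(1-y^2)

/-- First component of the vector field:
`f₁ = −(x − (ε/2)λy²)·D(λ) + (3/2)(x + 6ξz(λ))·B(x,y,λ)`. -/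
noncomputable def f1 (ε ξ wm : ℝ) (z : ℝ → ℝ) (x y l : ℝ) : ℝ :=
  -(x - ε/2*l*y^2) * Dfun ε ξ z l + 3/2*(x + 6*ξ*(z l)) * Bfun ε ξ wm z x y l

/-- Second component: `f₂ = y(2 − (1/2)λx)·D(λ) + (3/2)y·B(x,y,λ)`. -/
noncomputable def f2 (ε ξ wm : ℝ) (z : ℝ → ℝ) (x y l : ℝ) : ℝ :=
  y*(2 - 1/2*l*x) * Dfun ε ξ z l + 3/2*y * Bfun ε ξ wm z x y l

/-- Third component: `f₃ = x·D(λ)/z′(λ)`. -/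
noncomputable def f3 (ε ξ : ℝ) (z : ℝ → ℝ) (x y l : ℝ) : ℝ :=
  x * Dfun ε ξ z l / deriv z l

/-- The full vector field `F(x,y,λ) = (f₁,f₂,f₃)` of the reduced cosmological system. -/
noncomputable def Fvec (ε ξ wm : ℝ) (z : ℝ → ℝ) (x y l : ℝ) : ℝ × ℝ × ℝ :=
  (f1 ε ξ wm z x y l, f2 ε ξ wm z x y l, f3 ε ξ z x y l)

/-- The effective equation-of-state parameter `w_eff(x,y,λ)`. -/
noncomputable def weff (ε ξ wm : ℝ) (z : ℝ → ℝ) (x y l : ℝ) : ℝ :=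
  (Dfun ε ξ z l)⁻¹ *
    (-1 + ε*(1-6*ξ)*(1-wm)*x^2 + 2*ε*ξ*(1-3*wm)*(x + z l)^2
      + (1+wm)*(1-y^2) - 2*ε*ξ*(1-6*ξ)*(z l)^2 - 2*ξ*l*y^2*(z l))

/-- The Jacobian matrix `J_{ij} = ∂f_i/∂(j-th variable)` of `F` at the point `(x,y,λ)`. -/
noncomputable def Jmat (ε ξ wm : ℝ) (z : ℝ → ℝ) (x y l : ℝ) :
    Matrix (Fin 3) (Fin 3) ℝ :=
  Matrix.of
    ![![deriv (fun t => f1 ε ξ wm z t y l) x,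
        deriv (fun t => f1 ε ξ wm z x t l) y,
        deriv (fun t => f1 ε ξ wm z x y t) l],
      ![deriv (fun t => f2 ε ξ wm z t y l) x,
        deriv (fun t => f2 ε ξ wm z x t l) y,
        deriv (fun t => f2 ε ξ wm z x y t) l],
      ![deriv (fun t => f3 ε ξ z t y l) x,
        deriv (fun t => f3 ε ξ z x t l) y,
        deriv (fun t => f3 ε ξ z x y t) l]]

theorem Matrix.pow_eq_zero_of_charpoly_eq_X_pow {n R : Type*} [Fintype n] [DecidableEq n]
    [CommRing R] {M : Matrix n n R} {k : ℕ} (h : M.charpoly = X ^ k) : M ^ k = 0 := by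
  simpa [h] using M.aeval_self_charpoly

theorem Matrix.charpoly_eq_X_pow_three_of_trace_det {R : Type*} [CommRing R]
    {a b c d e f : R} (htr : a + e = 0) (hdet : a * e - b * d = 0) :
    (!![a, b, c; d, e, f; 0, 0, 0]).charpoly = X ^ 3 := by
  have hC : C a * C e - C b * C d = (0 : R[X]) := by
    rw [← C_mul, ← C_mul, ← C_sub, hdet, map_zero]
  have hT : C a + C e = (0 : R[X]) := by rw [← C_add, htr, map_zero]
  rw [Matrix.charpoly, Matrix.det_fin_three]
  simp only [Fin.isValue, charmatrix_apply_eq, of_apply, cons_val', cons_val_zero, cons_val_fin_one,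
    cons_val_one, cons_val, map_zero, sub_zero, ne_eq, Fin.reduceEq, not_false_eq_true,
    charmatrix_apply_ne, mul_neg, neg_zero, mul_zero, zero_ne_one, one_ne_zero, neg_mul, neg_neg,
    add_zero]
  linear_combination (X : R[X]) * hC - X ^ 2 * hT

section
variable (ε ξ wm : ℝ) (z : ℝ → ℝ) (x y l : ℝ)

lemma hasDerivAt_Bfun_fst :
    HasDerivAt (fun t => Bfun ε ξ wm z t y l)
      (2*ε*(1-6*ξ)*(1-wm)*x + 4*ε*ξ*(1-3*wm)*(x + z l)) x := by
  have h := ((((hasDerivAt_id' x).fun_pow 2).const_mul (ε*(1-6*ξ)*(1-wm))).fun_add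
    ((((hasDerivAt_id' x).add_const (z l)).fun_pow 2).const_mul (2*ε*ξ*(1-3*wm)))).const_add
    (-4/3 - 2*ξ*l*y^2*(z l) + (1+wm)*(1-y^2))
  refine (h.congr_deriv (by push_cast; ring)).congr_of_eventuallyEq
    (Eventually.of_forall fun t => ?_)
  simp only [Bfun]; ring

lemma hasDerivAt_Bfun_snd :
    HasDerivAt (fun t => Bfun ε ξ wm z x t l) (-2*y*(2*ξ*l*z l + 1 + wm)) y := by
  have h := (((hasDerivAt_id' y).fun_pow 2).const_mul (-(2*ξ*l*z l + 1 + wm))).const_add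
    (-4/3 + ε*(1-6*ξ)*(1-wm)*x^2 + 2*ε*ξ*(1-3*wm)*(x + z l)^2 + (1+wm))
  refine (h.congr_deriv (by push_cast; ring)).congr_of_eventuallyEq
    (Eventually.of_forall fun t => ?_)
  simp only [Bfun]; ring

lemma deriv_f1_fst :
    deriv (fun t => f1 ε ξ wm z t y l) x = -Dfun ε ξ z l + 3/2 * Bfun ε ξ wm z x y l
      + 3/2*(x + 6*ξ*z l) * (2*ε*(1-6*ξ)*(1-wm)*x + 4*ε*ξ*(1-3*wm)*(x + z l)) := by
  have h := (((hasDerivAt_id' x).sub_const (ε/2*l*y^2)).fun_neg.mul_const (Dfun ε ξ z l)).fun_add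
    ((((hasDerivAt_id' x).add_const (6*ξ*z l)).const_mul (3/2)).fun_mul
      (hasDerivAt_Bfun_fst ε ξ wm z x y l))
  exact (h.congr_deriv (by ring)).deriv

lemma deriv_f1_snd :
    deriv (fun t => f1 ε ξ wm z x t l) y
      = ε*l*y*Dfun ε ξ z l - 3*(x + 6*ξ*z l)*y*(2*ξ*l*z l + 1 + wm) := by
  have h := ((((hasDerivAt_id' y).fun_pow 2).const_mul (ε/2*l)).const_sub x).fun_neg.mul_const
    (Dfun ε ξ z l) |>.fun_add ((hasDerivAt_Bfun_snd ε ξ wm z x y l).const_mul (3/2*(x + 6*ξ*z l)))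
  exact (h.congr_deriv (by push_cast; ring)).deriv

lemma deriv_f2_fst :
    deriv (fun t => f2 ε ξ wm z t y l) x
      = -y*l/2*Dfun ε ξ z l + 3/2*y*(2*ε*(1-6*ξ)*(1-wm)*x + 4*ε*ξ*(1-3*wm)*(x + z l)) := by
  have h := ((((hasDerivAt_id' x).const_mul (1/2*l)).const_sub 2).const_mul y).mul_const
    (Dfun ε ξ z l) |>.fun_add ((hasDerivAt_Bfun_fst ε ξ wm z x y l).const_mul (3/2*y))
  exact (h.congr_deriv (by ring)).deriv

lemma deriv_f2_snd :
    deriv (fun t => f2 ε ξ wm z x t l) y = (2 - 1/2*l*x)*Dfun ε ξ z l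
      + 3/2*Bfun ε ξ wm z x y l - 3*y^2*(2*ξ*l*z l + 1 + wm) := by
  have h := ((hasDerivAt_id' y).mul_const (2 - 1/2*l*x)).mul_const (Dfun ε ξ z l) |>.fun_add
    (((hasDerivAt_id' y).const_mul (3/2)).fun_mul (hasDerivAt_Bfun_snd ε ξ wm z x y l))
  exact (h.congr_deriv (by ring)).deriv

lemma deriv_f3_fst : deriv (fun t => f3 ε ξ z t y l) x = Dfun ε ξ z l / deriv z l :=
  (((hasDerivAt_id' x).mul_const (Dfun ε ξ z l)).div_const (deriv z l)).deriv.trans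
    (by rw [one_mul])

lemma deriv_f3_snd : deriv (fun t => f3 ε ξ z x t l) y = 0 :=
  deriv_const y _

lemma deriv_f3_zero_thd : deriv (fun t => f3 ε ξ z 0 y t) l = 0 := by
  simp [f3]

end

lemma Jmat_zero_eq_of_Dfun_Bfun_eq_zero {ε ξ wm : ℝ} {z : ℝ → ℝ} {y l : ℝ} (hD : Dfun ε ξ z l = 0)
    (hB : Bfun ε ξ wm z 0 y l = 0) :
    Jmat ε ξ wm z 0 y l =
      !![36*ε*ξ^2*(1-3*wm)*z l^2, -18*ξ*z l*y*(2*ξ*l*z l + 1 + wm),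
          deriv (fun t => f1 ε ξ wm z 0 y t) l;
        6*ε*ξ*(1-3*wm)*y*z l, -3*y^2*(2*ξ*l*z l + 1 + wm), deriv (fun t => f2 ε ξ wm z 0 y t) l;
        0, 0, 0] := by
  rw [Jmat, deriv_f1_fst, deriv_f1_snd, deriv_f2_fst, deriv_f2_snd, deriv_f3_fst,
    deriv_f3_snd, deriv_f3_zero_thd, hD, hB, zero_div]
  ext i j
  fin_cases i <;> fin_cases j <;>
    simp only [Fin.isValue, Fin.zero_eta, Fin.mk_one, Fin.reduceFinMk, Matrix.of_apply,
      Matrix.cons_val', Matrix.cons_val, Matrix.cons_val_zero, Matrix.cons_val_one,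
      Matrix.cons_val_fin_one] <;>
    ring

lemma Bfun_eq_zero_of_Dfun_eq_zero {ε ξ wm : ℝ} {z : ℝ → ℝ} {y l : ℝ} (hD : Dfun ε ξ z l = 0)
    (hξ : 1 - 6*ξ ≠ 0) (hy : y^2 * ((1-6*ξ)*(2*ξ*l*z l + 1 + wm)) = 2*ξ*(1-3*wm)) :
    Bfun ε ξ wm z 0 y l = 0 := by
  have h : (1 - 6*ξ) * (3 * Bfun ε ξ wm z 0 y l) = 0 := by
    unfold Bfun; unfold Dfun at hD
    linear_combination -(1-3*wm)*hD - 3*hy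
  simpa [hξ] using h

theorem slowRoll_point_nilpotent_general (ε ξ wm : ℝ) (z : ℝ → ℝ) (lstar : ℝ)
    (hsign : 0 < ε*ξ*(1-6*ξ))
    (hl : (z lstar)^2 = 1/(6*ε*ξ*(1-6*ξ)))
    (hpos : 0 < 2*ξ*(1-3*wm)/((1-6*ξ)*(2*ξ*lstar*(z lstar) + 1 + wm))) :
    (Jmat ε ξ wm z 0
        (Real.sqrt (2*ξ*(1-3*wm)/((1-6*ξ)*(2*ξ*lstar*(z lstar) + 1 + wm)))) lstar)^3
      = 0 ∧
    (Jmat ε ξ wm z 0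
        (Real.sqrt (2*ξ*(1-3*wm)/((1-6*ξ)*(2*ξ*lstar*(z lstar) + 1 + wm)))) lstar).charpoly
      = X^3 := by
  set Y := Real.sqrt (2*ξ*(1-3*wm)/((1-6*ξ)*(2*ξ*lstar*(z lstar) + 1 + wm)))
  have hden := (div_ne_zero_iff.mp hpos.ne').2
  have hξ : 1 - 6*ξ ≠ 0 := left_ne_zero_of_mul hden
  have hD : Dfun ε ξ z lstar = 0 := by
    rw [Dfun, hl, mul_one_div_cancel (by linarith : 0 < 6*ε*ξ*(1-6*ξ)).ne', sub_self]
  have hY : Y^2 * ((1-6*ξ)*(2*ξ*lstar*z lstar + 1 + wm)) = 2*ξ*(1-3*wm) := by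
    rw [Real.sq_sqrt hpos.le, div_mul_cancel₀ _ hden]
  have htr : 36*ε*ξ^2*(1-3*wm)*z lstar^2 + -3*Y^2*(2*ξ*lstar*z lstar + 1 + wm) = 0 := by
    have h : (1 - 6*ξ) * (36*ε*ξ^2*(1-3*wm)*z lstar^2 + -3*Y^2*(2*ξ*lstar*z lstar + 1 + wm))
        = 0 := by
      unfold Dfun at hD
      linear_combination -6*ξ*(1-3*wm)*hD - 3*hY
    simpa [hξ] using h
  rw [Jmat_zero_eq_of_Dfun_Bfun_eq_zero hD (Bfun_eq_zero_of_Dfun_eq_zero hD hξ hY)]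
  refine (fun h => ⟨Matrix.pow_eq_zero_of_charpoly_eq_X_pow h, h⟩)
    (Matrix.charpoly_eq_X_pow_three_of_trace_det htr ?_)
  ring

/-- At the slow-roll inflation point `P₂ᵦ = (0, y*, λ*)`,
`y* = √(2ξ(1−3w_m)/((1−6ξ)(2ξλ*z(λ*)+1+w_m)))`, the Jacobian is nilpotent of order 3
(`J³ = 0`); in particular all its eigenvalues vanish (`charpoly = X³`) and the point
is degenerate. -/
theorem slowRoll_point_nilpotent (ε ξ wm : ℝ) (z : ℝ → ℝ) (lstar : ℝ)
    (hε : ε = 1 ∨ ε = -1) (hξ0 : ξ ≠ 0) (hξ6 : ξ ≠ 1/6)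
    (hsign : 0 < ε*ξ*(1-6*ξ))
    (hz1 : ∀ᶠ t in nhds lstar, DifferentiableAt ℝ z t)
    (hz2 : DifferentiableAt ℝ (deriv z) lstar) (hz' : deriv z lstar ≠ 0)
    (hl : (z lstar)^2 = 1/(6*ε*ξ*(1-6*ξ)))
    (hden : (1-6*ξ)*(2*ξ*lstar*(z lstar) + 1 + wm) ≠ 0)
    (hpos : 0 < 2*ξ*(1-3*wm)/((1-6*ξ)*(2*ξ*lstar*(z lstar) + 1 + wm))) :
    (Jmat ε ξ wm z 0
        (Real.sqrt (2*ξ*(1-3*wm)/((1-6*ξ)*(2*ξ*lstar*(z lstar) + 1 + wm)))) lstar)^3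
      = 0 ∧
    (Jmat ε ξ wm z 0
        (Real.sqrt (2*ξ*(1-3*wm)/((1-6*ξ)*(2*ξ*lstar*(z lstar) + 1 + wm)))) lstar).charpoly
      = X^3 :=
  slowRoll_point_nilpotent_general ε ξ wm z lstar hsign hl hpos
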